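/- arXiv:1102.1531 — 9 statements merged into one kernel-verified Lean document; each statement's English description precedes it below -/
import Mathlib

section
/- Let θ = (k_r) be a lacunary sequence with liminf_r k_r/k_{r-1} > 1. Then every statistically quasi-Cauchy sequence of reals is lacunarily statistically quasi-Cauchy (with respect to θ). -/
open Filter Finset Topology

/-- A sequence `x` converges statistically to `ℓ`. -/
def StatConvTo (x : ℕ → ℝ) (ℓ : ℝ) : Prop :=
  ∀ ε > 0, Tendsto (fun n : ℕ =>
      ((((Finset.range n).filter fun k => ε ≤ |x k - ℓ|).card : ℝ) / (n : ℝ)))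
    atTop (𝓝 0)

/-- A sequence is statistically quasi-Cauchy if its difference sequence
converges statistically to `0`. -/
def StatQC (a : ℕ → ℝ) : Prop :=
  StatConvTo (fun n => a (n + 1) - a n) 0

/-- A lacunary sequence `θ = (k_r)`: strictly increasing, `k 0 = 0`,
and `h_r = k_{r+1} - k_r → ∞`. -/
structure Lacunary where
  k : ℕ → ℕ
  strictMono : StrictMono k
  zero : k 0 = 0
  h_tendsto : Tendsto (fun r => k (r + 1) - k r) atTop atTop

/-- Lacunary statistical convergence of `x` to `ℓ` with respect to `θ`. -/
def LacStatConvTo (θ : Lacunary) (x : ℕ → ℝ) (ℓ : ℝ) : Prop :=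
  ∀ ε > 0, Tendsto (fun r : ℕ =>
      ((((Finset.Ioc (θ.k r) (θ.k (r + 1))).filter fun i => ε ≤ |x i - ℓ|).card : ℝ)
        / ((θ.k (r + 1) - θ.k r : ℕ) : ℝ)))
    atTop (𝓝 0)

/-- A sequence is lacunarily statistically quasi-Cauchy (w.r.t. `θ`). -/
def LacStatQC (θ : Lacunary) (a : ℕ → ℝ) : Prop :=
  LacStatConvTo θ (fun n => a (n + 1) - a n) 0

/-- `liminf q_r > 1` where `q_r = k_{r+1} / k_r`. -/
def LiminfQGtOne (θ : Lacunary) : Prop :=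
  ∃ a : ℝ, 1 < a ∧ ∀ᶠ r in atTop, a ≤ (θ.k (r + 1) : ℝ) / (θ.k r : ℝ)

/-- `limsup q_r < ∞` where `q_r = k_{r+1} / k_r`. -/
def LimsupQLtTop (θ : Lacunary) : Prop :=
  ∃ H : ℝ, ∀ᶠ r in atTop, (θ.k (r + 1) : ℝ) / (θ.k r : ℝ) ≤ H

/-- `A` is lacunarily statistically ward compact w.r.t. `θ`. -/
def LacStatWardCompact (θ : Lacunary) (A : Set ℝ) : Prop :=
  ∀ x : ℕ → ℝ, (∀ n, x n ∈ A) →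
    ∃ φ : ℕ → ℕ, StrictMono φ ∧ LacStatQC θ (x ∘ φ)

/-- `f` is lacunarily statistically ward continuous on `A` w.r.t. `θ`. -/
def LacStatWardContOn (θ : Lacunary) (f : ℝ → ℝ) (A : Set ℝ) : Prop :=
  ∀ x : ℕ → ℝ, (∀ n, x n ∈ A) → LacStatQC θ x → LacStatQC θ (f ∘ x)

set_option maxHeartbeats 1000000 in
theorem statQC_subset_lacStatQC (θ : Lacunary) (hθ : LiminfQGtOne θ)
    (a : ℕ → ℝ) (h : StatQC a) : LacStatQC θ a := by
  obtain ⟨A, hA1, hAev⟩ := hθ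
  intro ε hε
  set D : ℕ → ℝ := fun n =>
    ((((Finset.range n).filter fun k => ε ≤ |a (k + 1) - a k - 0|).card : ℝ) / (n : ℝ)) with hDdef
  have hD : Tendsto D atTop (𝓝 0) := h ε hε
  have hkn : Tendsto (fun r => θ.k (r + 1) + 1) atTop atTop := by
    apply tendsto_atTop_atTop_of_monotone' ?_ ?_
    · intro x y hxy
      simp only [add_le_add_iff_right]
      exact θ.strictMono.monotone (by omega)
    · rintro ⟨B, hB⟩
      have := hB (Set.mem_range_self B)
      have : B + 1 ≤ θ.k (B + 1) := θ.strictMono.le_apply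
      omega
  have hD2 : Tendsto (fun r => D (θ.k (r + 1) + 1)) atTop (𝓝 0) := hD.comp hkn
  set C : ℝ := A / (A - 1) + 1 with hCdef
  have hg : Tendsto (fun r => C * D (θ.k (r + 1) + 1)) atTop (𝓝 0) := by
    simpa using hD2.const_mul C
  apply squeeze_zero' ?_ ?_ hg
  · filter_upwards with r
    positivity
  · filter_upwards [hAev, θ.h_tendsto.eventually_ge_atTop 1,
      (θ.strictMono.tendsto_atTop).eventually_ge_atTop 1] with r h1 h2 h3
    set m := θ.k r with hm
    set n := θ.k (r + 1) with hn
    have hmn : m < n := θ.strictMono (Nat.lt_succ_self r)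
    have hcast : ((n - m : ℕ) : ℝ) = (n : ℝ) - (m : ℝ) := by
      exact_mod_cast Nat.cast_sub hmn.le
    have hm0 : (1 : ℝ) ≤ (m : ℝ) := by exact_mod_cast h3
    have hh1 : (1 : ℝ) ≤ (n : ℝ) - (m : ℝ) := by
      rw [← hcast]; exact_mod_cast h2
    have hn0 : (0 : ℝ) < (n : ℝ) := by linarith
    have hAm : A * (m : ℝ) ≤ (n : ℝ) := by
      have := (le_div_iff₀ (by linarith : (0:ℝ) < (m:ℝ))).mp h1
      linarith
    have hA1' : (0 : ℝ) < A - 1 := by linarith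
    have hh0 : (0 : ℝ) < (n : ℝ) - (m : ℝ) := by linarith
    have hnled : (n : ℝ) ≤ (A / (A - 1)) * ((n : ℝ) - (m : ℝ)) := by
      rw [div_mul_eq_mul_div, le_div_iff₀ hA1']
      nlinarith
    have hCh : (n : ℝ) + 1 ≤ C * ((n : ℝ) - (m : ℝ)) := by
      rw [hCdef, add_mul, one_mul]
      linarith
    -- card bound
    have hsub : (Finset.Ioc m n).filter (fun i => ε ≤ |a (i + 1) - a i - 0|) ⊆
        (Finset.range (n + 1)).filter (fun i => ε ≤ |a (i + 1) - a i - 0|) := by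
      apply Finset.filter_subset_filter
      intro i hi
      simp only [Finset.mem_Ioc] at hi
      simp [Nat.lt_succ_iff, hi.2]
    have hcard : (((Finset.Ioc m n).filter (fun i => ε ≤ |a (i + 1) - a i - 0|)).card : ℝ) ≤
        (((Finset.range (n + 1)).filter (fun i => ε ≤ |a (i + 1) - a i - 0|)).card : ℝ) := by
      exact_mod_cast Finset.card_le_card hsub
    set c : ℝ := (((Finset.range (n + 1)).filter (fun i => ε ≤ |a (i + 1) - a i - 0|)).card : ℝ)
      with hc
    have hc0 : 0 ≤ c := by positivity
    have hDval : D (n + 1) = c / (((n : ℕ) + 1 : ℕ) : ℝ) := by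
      simp [hDdef, hc]
    rw [hcast]
    calc (((Finset.Ioc m n).filter (fun i => ε ≤ |a (i + 1) - a i - 0|)).card : ℝ)
          / ((n : ℝ) - (m : ℝ)) ≤ c / ((n : ℝ) - (m : ℝ)) := by gcongr
      _ ≤ C * (c / ((n : ℝ) + 1)) := by
          rw [mul_div_assoc' , div_le_div_iff₀ hh0 (by positivity : (0:ℝ) < (n:ℝ) + 1)]
          nlinarith [mul_le_mul_of_nonneg_left hCh hc0]
      _ = C * D (n + 1) := by
          rw [hDval]
          norm_num
end

section
/- Let θ = (k_r) be a lacunary sequence with liminf_r k_r/k_{r-1} = 1. Then there exists a sequence of real numbers that is statistically quasi-Cauchy but not lacunarily statistically quasi-Cauchy with respect to θ. -/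
open Filter Finset Topology

/-!
Since `q_r` is frequently close to `1`, infinitely many blocks `I_r` are short compared with
`k_{r-1}`. Choosing such blocks `I_{t_j}` with `(j + 1) h_{t_j} ≤ k_{t_j - 1}` and with
`k_{t_{j+1} - 1} ≥ (j + 2) k_{t_j}`, their union `B` has natural density `0`. The counting
function of `B` has the indicator of `B` as difference sequence, so it is statistically
quasi-Cauchy, while on each chosen block every difference equals `1`.
-/

theorem Filter.exists_seq_forall_of_frequently_of_le_succ {P : ℕ → ℕ → Prop}
    (h : ∀ n, ∃ᶠ k in atTop, P n k) (g : ℕ → ℕ → ℕ) :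
    ∃ φ : ℕ → ℕ, (∀ n, P n (φ n)) ∧ ∀ n, g n (φ n) ≤ φ (n + 1) := by
  simp only [frequently_atTop] at h
  choose F hF_ge hF using h
  refine ⟨fun n => Nat.rec (F 0 0) (fun n r => F (n + 1) (g n r)) n, fun n => ?_,
    fun n => hF_ge _ _⟩
  cases n <;> exact hF _ _

theorem statQC_count {p : ℕ → Prop} [DecidablePred p]
    (hp : Tendsto (fun n => (Nat.count p n : ℝ) / n) atTop (𝓝 0)) :
    StatQC fun n => (Nat.count p n : ℝ) := by
  intro ε hε
  have hdiff (n : ℕ) : (Nat.count p (n + 1) : ℝ) - Nat.count p n = if p n then 1 else 0 := by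
    rw [Nat.count_succ]; split_ifs <;> simp
  refine squeeze_zero (fun n => by positivity)
    (fun n => div_le_div_of_nonneg_right ?_ n.cast_nonneg) hp
  rw [Nat.count_eq_card_filter_range]
  refine Nat.mono_cast (card_le_card fun m hm => ?_)
  simp only [mem_filter] at hm ⊢
  refine ⟨hm.1, by_contra fun hpm => ?_⟩
  have : ε ≤ 0 := by simpa [hdiff, hpm] using hm.2
  linarith

theorem not_lacStatQC_count (θ : Lacunary) {p : ℕ → Prop} [DecidablePred p]
    (hp : ∃ᶠ r in atTop, ∀ i ∈ Ioc (θ.k r) (θ.k (r + 1)), p i) :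
    ¬ LacStatQC θ fun n => (Nat.count p n : ℝ) := by
  intro hL
  obtain ⟨r, hfull, hsmall⟩ :=
    (hp.and_eventually ((hL 1 one_pos).eventually (gt_mem_nhds one_pos))).exists
  have hdiff : ∀ i ∈ Ioc (θ.k r) (θ.k (r + 1)),
      (1 : ℝ) ≤ |(Nat.count p (i + 1) : ℝ) - Nat.count p i - 0| := fun i hi => by
    simp [Nat.count_succ, hfull i hi]
  have hh : ((θ.k (r + 1) - θ.k r : ℕ) : ℝ) ≠ 0 := by
    have := θ.strictMono (Nat.lt_add_one r)
    norm_cast; omega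
  rw [filter_true_of_mem hdiff, Nat.card_Ioc, div_self hh] at hsmall
  exact lt_irrefl _ hsmall

section Density

variable {u v : ℕ → ℕ}

theorem sum_range_sub_le (huv : ∀ j, u j ≤ v j) (hvu : ∀ j, v j ≤ u (j + 1)) (j : ℕ) :
    ∑ i ∈ range (j + 1), (v i - u i) ≤ v j := by
  induction j with
  | zero => simp
  | succ j ih =>
    rw [sum_range_succ]
    have := hvu j
    have := huv (j + 1)
    omega

theorem mul_sum_range_sub_le (huv : ∀ j, u j ≤ v j) (hlen : ∀ j, (j + 1) * (v j - u j) ≤ u j)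
    (hgap : ∀ j, (j + 2) * v j ≤ u (j + 1)) (j : ℕ) :
    (j + 1) * ∑ i ∈ range (j + 1), (v i - u i) ≤ 2 * u j := by
  cases j with
  | zero => simpa using (hlen 0).trans (Nat.le_mul_of_pos_left _ two_pos)
  | succ j =>
    have hvu (i : ℕ) : v i ≤ u (i + 1) := (Nat.le_mul_of_pos_left _ (by omega)).trans (hgap i)
    calc (j + 1 + 1) * ∑ i ∈ range (j + 1 + 1), (v i - u i)
        = (j + 2) * ∑ i ∈ range (j + 1), (v i - u i) + (j + 2) * (v (j + 1) - u (j + 1)) := by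
          rw [sum_range_succ]; ring
      _ ≤ (j + 2) * v j + u (j + 1) :=
          add_le_add (Nat.mul_le_mul_left _ (sum_range_sub_le huv hvu j)) (hlen (j + 1))
      _ ≤ 2 * u (j + 1) := by linarith [hgap j]

variable [DecidablePred (· ∈ ⋃ j, Set.Ioc (u j) (v j))]

theorem count_iUnion_Ioc_le_sum (hu : Monotone u) {n j : ℕ} (hn : n ≤ u (j + 1)) :
    Nat.count (· ∈ ⋃ i, Set.Ioc (u i) (v i)) n ≤ ∑ i ∈ range (j + 1), (v i - u i) := by
  rw [Nat.count_eq_card_filter_range]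
  calc #{m ∈ range n | m ∈ ⋃ i, Set.Ioc (u i) (v i)}
      ≤ #((range (j + 1)).biUnion fun i => Ioc (u i) (v i)) := by
        refine card_le_card fun m hm => ?_
        simp only [mem_filter, mem_range, Set.mem_iUnion, Set.mem_Ioc] at hm
        obtain ⟨hmn, i, hi⟩ := hm
        refine mem_biUnion.2 ⟨i, mem_range.2 ?_, mem_Ioc.2 hi⟩
        by_contra! hji
        have := hu hji
        omega
    _ ≤ ∑ i ∈ range (j + 1), #(Ioc (u i) (v i)) := card_biUnion_le
    _ = ∑ i ∈ range (j + 1), (v i - u i) := by simp only [Nat.card_Ioc]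

theorem mul_count_iUnion_Ioc_le (hu : StrictMono u) (huv : ∀ j, u j ≤ v j)
    (hlen : ∀ j, (j + 1) * (v j - u j) ≤ u j) (hgap : ∀ j, (j + 2) * v j ≤ u (j + 1))
    {j n : ℕ} (hn : u j < n) :
    (j + 1) * Nat.count (· ∈ ⋃ i, Set.Ioc (u i) (v i)) n ≤ 2 * n := by
  obtain ⟨j', hj'n, hnj'⟩ := hu.exists_between_of_tendsto_atTop hu.tendsto_atTop
    ((hu.monotone (Nat.zero_le j)).trans_lt hn)
  have hjj' : j ≤ j' := Nat.lt_succ_iff.mp (hu.lt_iff_lt.mp (hn.trans_le hnj'))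
  calc (j + 1) * Nat.count (· ∈ ⋃ i, Set.Ioc (u i) (v i)) n
      ≤ (j' + 1) * ∑ i ∈ range (j' + 1), (v i - u i) :=
        Nat.mul_le_mul (by omega) (count_iUnion_Ioc_le_sum hu.monotone hnj')
    _ ≤ 2 * u j' := mul_sum_range_sub_le huv hlen hgap j'
    _ ≤ 2 * n := by omega

theorem tendsto_count_iUnion_Ioc_div (hu : StrictMono u) (huv : ∀ j, u j ≤ v j)
    (hlen : ∀ j, (j + 1) * (v j - u j) ≤ u j) (hgap : ∀ j, (j + 2) * v j ≤ u (j + 1)) :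
    Tendsto (fun n => (Nat.count (· ∈ ⋃ i, Set.Ioc (u i) (v i)) n : ℝ) / n) atTop (𝓝 0) := by
  refine tendsto_order.2 ⟨fun a ha => Eventually.of_forall fun n => ha.trans_le (by positivity),
    fun ε hε => ?_⟩
  obtain ⟨j, hj⟩ := exists_nat_gt (2 / ε)
  filter_upwards [eventually_gt_atTop (u j)] with n hn
  have hn0 : (0 : ℝ) < n := by exact_mod_cast (Nat.zero_le _).trans_lt hn
  have hcount : ((j + 1) * Nat.count (· ∈ ⋃ i, Set.Ioc (u i) (v i)) n : ℝ) ≤ 2 * n := by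
    exact_mod_cast mul_count_iUnion_Ioc_le hu huv hlen hgap hn
  rw [div_lt_iff₀ hε] at hj
  rw [div_lt_iff₀ hn0]
  nlinarith

end Density

namespace Lacunary

variable (θ : Lacunary)

theorem frequently_mul_sub_lt
    (hθ : Filter.liminf (fun r => (θ.k (r + 1) : ℝ) / (θ.k r : ℝ)) atTop = 1) (m : ℕ) :
    ∃ᶠ r in atTop, (m + 1) * (θ.k (r + 1) - θ.k r) < θ.k r := by
  -- otherwise the liminf would take the junk value `0`
  have hcobdd : IsCoboundedUnder (· ≥ ·) atTop fun r => (θ.k (r + 1) : ℝ) / (θ.k r : ℝ) := by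
    by_contra h
    rw [Real.liminf_of_not_isCoboundedUnder h] at hθ
    exact zero_ne_one hθ
  have hm : (0 : ℝ) < m + 1 := by positivity
  have hfreq := frequently_lt_of_liminf_lt hcobdd
    (hθ.trans_lt (lt_add_of_pos_right 1 (one_div_pos.2 hm)))
  refine (hfreq.and_eventually (eventually_ge_atTop 1)).mono fun r ⟨hq, hr⟩ => ?_
  have hpos : (0 : ℝ) < θ.k r := by
    have := θ.strictMono (Nat.zero_lt_of_lt hr)
    rw [θ.zero] at this
    exact_mod_cast this
  have hle : θ.k r ≤ θ.k (r + 1) := (θ.strictMono (Nat.lt_add_one r)).le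
  rw [div_lt_iff₀ hpos] at hq
  rw [← Nat.cast_lt (α := ℝ)]
  push_cast [Nat.cast_sub hle]
  have := mul_lt_mul_of_pos_left hq hm
  field_simp at this
  linarith

theorem exists_short_sparse_blocks
    (hθ : Filter.liminf (fun r => (θ.k (r + 1) : ℝ) / (θ.k r : ℝ)) atTop = 1) :
    ∃ t : ℕ → ℕ, StrictMono t ∧ (∀ j, (j + 1) * (θ.k (t j + 1) - θ.k (t j)) ≤ θ.k (t j)) ∧
      ∀ j, (j + 2) * θ.k (t j + 1) ≤ θ.k (t (j + 1)) := by
  obtain ⟨t, hshort, hnext⟩ :=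
    exists_seq_forall_of_frequently_of_le_succ (θ.frequently_mul_sub_lt hθ)
      fun j r => max (r + 1) ((j + 2) * θ.k (r + 1))
  exact ⟨t, strictMono_nat_of_lt_succ fun j => (le_max_left _ _).trans (hnext j),
    fun j => (hshort j).le,
    fun j => ((le_max_right _ _).trans (hnext j)).trans (θ.strictMono.id_le _)⟩

end Lacunary

theorem exists_statQC_not_lacStatQC (θ : Lacunary)
    (hθ : Filter.liminf (fun r => (θ.k (r + 1) : ℝ) / (θ.k r : ℝ)) atTop = 1) :
    ∃ a : ℕ → ℝ, StatQC a ∧ ¬ LacStatQC θ a := by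
  classical
  obtain ⟨t, ht, hlen, hgap⟩ := θ.exists_short_sparse_blocks hθ
  have hdensity := tendsto_count_iUnion_Ioc_div (θ.strictMono.comp ht)
    (fun j => θ.strictMono.monotone (Nat.le_succ (t j))) hlen hgap
  refine ⟨_, statQC_count hdensity, not_lacStatQC_count θ ?_⟩
  exact ht.tendsto_atTop.frequently <| Frequently.of_forall fun j i hi =>
    Set.mem_iUnion.2 ⟨j, by simpa using hi⟩
end

section
/- Let θ = (k_r) be a lacunary sequence with limsup_r k_r/k_{r-1} < ∞. Then every lacunarily statistically quasi-Cauchy sequence (with respect to θ) is statistically quasi-Cauchy. -/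
open Filter Finset Topology

/-!
Fix `ε > 0` and call `i` bad if `|x_i - ℓ| ≥ ε`. If `c_r` bad indices lie in the block
`(k_r, k_{r+1}]`, then `c_r = o(h_r)`, and since the block lengths `h_r` sum to `k_r → ∞`, the
weighted Cesàro argument gives `∑_{j < r} c_j = o(k_r)`: the bad indices have density zero along
the subsequence `k_r`. For `k_r < n ≤ k_{r+1}`, the number of bad indices up to `n` is at most
that up to `k_{r+1}`, while `k_{r+1} ≤ H k_r < H n`; bounded ratios `q_r` thus transfer the
density from the subsequence to all `n`.
-/

theorem StrictMono.exists_mem_Ioc_succ {k : ℕ → ℕ} (hk : StrictMono k) {n : ℕ}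
    (hn : k 0 < n) :
    ∃ r, n ∈ Ioc (k r) (k (r + 1)) := by
  have hex : ∃ m, n ≤ k m := ⟨n, hk.id_le n⟩
  obtain ⟨r, hr⟩ : ∃ r, Nat.find hex = r + 1 :=
    Nat.exists_eq_add_one.2 (Nat.pos_of_ne_zero fun h0 => hn.not_ge (h0 ▸ Nat.find_spec hex))
  refine ⟨r, mem_Ioc.2 ⟨?_, hr ▸ Nat.find_spec hex⟩⟩
  exact not_le.1 (Nat.find_min hex (by omega))

theorem tendsto_sum_range_div_sum_range {c h : ℕ → ℝ} (hh : ∀ j, 0 < h j)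
    (hsum : Tendsto (fun r => ∑ j ∈ range r, h j) atTop atTop)
    (hch : Tendsto (fun j => c j / h j) atTop (𝓝 0)) :
    Tendsto (fun r => (∑ j ∈ range r, c j) / ∑ j ∈ range r, h j) atTop (𝓝 0) :=
  (((Asymptotics.isLittleO_iff_tendsto fun j hj => absurd hj (hh j).ne').2 hch).sum_range
    (fun j => (hh j).le) hsum).tendsto_div_nhds_zero

theorem card_filter_Iic_eq_add_sum {k : ℕ → ℕ} (hk : Monotone k) (P : ℕ → Prop)
    [DecidablePred P] (r : ℕ) :
    #{i ∈ Iic (k r) | P i} =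
      #{i ∈ Iic (k 0) | P i} + ∑ j ∈ range r, #{i ∈ Ioc (k j) (k (j + 1)) | P i} := by
  induction r with
  | zero => simp
  | succ r ih =>
    rw [sum_range_succ, ← add_assoc, ← ih,
      ← card_union_of_disjoint (disjoint_filter_filter (Iic_disjoint_Ioc le_rfl)),
      ← filter_union, Iic_union_Ioc_eq_Iic (hk r.le_succ)]

theorem tendsto_div_of_tendsto_div_comp {u : ℕ → ℝ} (hu₀ : 0 ≤ u) (hu : Monotone u)
    {k : ℕ → ℕ} (hk : StrictMono k) {C : ℝ}
    (hC : ∀ᶠ r in atTop, (k (r + 1) : ℝ) / k r ≤ C)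
    (hlim : Tendsto (fun r => u (k r) / k r) atTop (𝓝 0)) :
    Tendsto (fun n => u n / n) atTop (𝓝 0) := by
  have hnext : Tendsto (fun r => u (k (r + 1)) / k r) atTop (𝓝 0) := by
    refine squeeze_zero' (.of_forall fun r => div_nonneg (hu₀ _) (k r).cast_nonneg) ?_
      (by simpa using (hlim.comp (tendsto_add_atTop_nat 1)).mul_const C)
    filter_upwards [hC] with r hr
    have hpos : (0 : ℝ) < k (r + 1) := by
      exact_mod_cast (Nat.zero_le _).trans_lt (hk r.lt_succ_self)
    calc u (k (r + 1)) / k r = u (k (r + 1)) / k (r + 1) * ((k (r + 1) : ℝ) / k r) := by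
          rw [div_mul_div_cancel₀ hpos.ne']
      _ ≤ u (k (r + 1)) / k (r + 1) * C := by gcongr; exact div_nonneg (hu₀ _) hpos.le
  refine tendsto_order.2 ⟨fun a ha => .of_forall fun n => ha.trans_le
    (div_nonneg (hu₀ n) n.cast_nonneg), fun ε hε => ?_⟩
  obtain ⟨R, hR⟩ := eventually_atTop.1 ((hnext.eventually (gt_mem_nhds hε)).and
    (eventually_ge_atTop 1))
  filter_upwards [eventually_gt_atTop (k R)] with n hn
  obtain ⟨r, hr⟩ := hk.exists_mem_Ioc_succ ((hk.monotone R.zero_le).trans_lt hn)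
  rw [mem_Ioc] at hr
  have hRr : R ≤ r := Nat.lt_succ_iff.1 (hk.lt_iff_lt.1 (hn.trans_le hr.2))
  obtain ⟨hεr, hr1⟩ := hR r hRr
  have hkr : (0 : ℝ) < k r := by exact_mod_cast hr1.trans (hk.id_le r)
  calc u n / n ≤ u (k (r + 1)) / n := by gcongr; exact hu hr.2
    _ ≤ u (k (r + 1)) / k r := by
        gcongr
        · exact hu₀ _
        · exact_mod_cast hr.1.le
    _ < ε := hεr

namespace Lacunary

variable (θ : Lacunary)

theorem sum_range_gap (r : ℕ) :
    ∑ j ∈ range r, ((θ.k (j + 1) - θ.k j : ℕ) : ℝ) = θ.k r := by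
  simp only [Nat.cast_sub (θ.strictMono.monotone (Nat.le_succ _))]
  rw [sum_range_sub (fun j => (θ.k j : ℝ)), θ.zero, Nat.cast_zero, sub_zero]

theorem tendsto_k : Tendsto (fun r => (θ.k r : ℝ)) atTop atTop :=
  tendsto_natCast_atTop_atTop.comp θ.strictMono.tendsto_atTop

theorem tendsto_card_filter_Iic_div {P : ℕ → Prop} [DecidablePred P]
    (hP : Tendsto (fun r => (#{i ∈ Ioc (θ.k r) (θ.k (r + 1)) | P i} : ℝ) /
      ((θ.k (r + 1) - θ.k r : ℕ) : ℝ)) atTop (𝓝 0)) :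
    Tendsto (fun r => (#{i ∈ Iic (θ.k r) | P i} : ℝ) / θ.k r) atTop (𝓝 0) := by
  have hgap : ∀ j, (0 : ℝ) < ((θ.k (j + 1) - θ.k j : ℕ) : ℝ) := fun j => by
    exact_mod_cast Nat.sub_pos_of_lt (θ.strictMono j.lt_succ_self)
  have hcesaro := tendsto_sum_range_div_sum_range hgap
    (by simpa only [sum_range_gap] using θ.tendsto_k) hP
  simp only [sum_range_gap] at hcesaro
  refine squeeze_zero (fun r => by positivity) (fun r => ?_)
    (by simpa using θ.tendsto_k.inv_tendsto_atTop.add hcesaro)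
  have hcount := card_filter_Iic_eq_add_sum θ.strictMono.monotone P r
  have hzero : #{i ∈ Iic (θ.k 0) | P i} ≤ 1 := by
    simpa [θ.zero] using card_filter_le (Iic 0) P
  rw [inv_eq_one_div, ← add_div]
  gcongr
  exact_mod_cast hcount ▸ Nat.add_le_add_right hzero _

end Lacunary

theorem LacStatConvTo.statConvTo {θ : Lacunary} (hθ : LimsupQLtTop θ) {x : ℕ → ℝ}
    {ℓ : ℝ} (h : LacStatConvTo θ x ℓ) : StatConvTo x ℓ := by
  obtain ⟨H, hH⟩ := hθ
  intro ε hε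
  have hmono : Monotone fun m => (#{i ∈ Iic m | ε ≤ |x i - ℓ|} : ℝ) := fun _ _ hm =>
    Nat.cast_le.2 (card_le_card (filter_subset_filter _ (Iic_subset_Iic.2 hm)))
  have hdensity := tendsto_div_of_tendsto_div_comp (fun m => by positivity) hmono
    θ.strictMono hH (θ.tendsto_card_filter_Iic_div (h ε hε))
  refine squeeze_zero (fun n => by positivity) (fun n => ?_) hdensity
  gcongr
  exact fun i hi => mem_Iic.2 (mem_range.1 hi).le

theorem lacStatQC_subset_statQC (θ : Lacunary) (hθ : LimsupQLtTop θ)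
    (a : ℕ → ℝ) (h : LacStatQC θ a) : StatQC a :=
  h.statConvTo hθ
end

section
/- Let θ = (k_r) be a lacunary sequence with limsup_r k_r/k_{r-1} = ∞. Then there exists a sequence of real numbers that is lacunarily statistically quasi-Cauchy (with respect to θ) but not statistically quasi-Cauchy. -/
/-!
Pick infinitely many blocks `I_r` along which `q_r → ∞` and mark the initial segment
`(k_r, 2k_r]` of each; let `a` be the counting function of the marked integers, so that
`a (n + 1) - a n` is the indicator of the marked set. Inside a chosen block the marked part has
relative size `k_r / h_r = 1 / (q_r - 1) → 0`, and the other blocks contain no marked integer,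
so `a` is lacunarily statistically quasi-Cauchy. But among the first `2k_r + 1` integers at
least `k_r` are marked, so the marked set does not have density zero.
-/

open Filter Finset Topology

lemma exists_seq_sub_eq (d : ℕ → ℝ) : ∃ a : ℕ → ℝ, ∀ n, a (n + 1) - a n = d n :=
  ⟨fun n => ∑ m ∈ range n, d m, fun _ => sum_range_succ_sub_sum d⟩

namespace Lacunary

variable (θ : Lacunary)

lemma self_le_k (r : ℕ) : r ≤ θ.k r :=
  θ.strictMono.le_apply

lemma eq_of_mem_Ioc {r s i : ℕ} (hr : i ∈ Ioc (θ.k r) (θ.k (r + 1)))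
    (hs : i ∈ Ioc (θ.k s) (θ.k (s + 1))) : r = s := by
  rw [mem_Ioc] at hr hs
  by_contra hne
  rcases Nat.lt_or_gt_of_ne hne with h | h
  · have := θ.strictMono.monotone (show r + 1 ≤ s by omega)
    omega
  · have := θ.strictMono.monotone (show s + 1 ≤ r by omega)
    omega

lemma k_succ_sub_k_pos (r : ℕ) : 0 < θ.k (r + 1) - θ.k r :=
  Nat.sub_pos_of_lt (θ.strictMono (Nat.lt_succ_self r))

def headSet (R : Set ℕ) : Set ℕ :=
  ⋃ r ∈ R, Set.Ioc (θ.k r) (2 * θ.k r)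

variable {θ}

lemma mem_headSet_of_mem_Ioc {R : Set ℕ} {r i : ℕ} (hr : r ∈ R)
    (hi : i ∈ Set.Ioc (θ.k r) (2 * θ.k r)) : i ∈ θ.headSet R :=
  Set.mem_biUnion hr hi

lemma mem_Ioc_of_mem_headSet {R : Set ℕ} (hdouble : ∀ r ∈ R, 2 * θ.k r ≤ θ.k (r + 1)) {r i : ℕ}
    (hi : i ∈ Ioc (θ.k r) (θ.k (r + 1))) (hS : i ∈ θ.headSet R) :
    r ∈ R ∧ i ∈ Ioc (θ.k r) (2 * θ.k r) := by
  obtain ⟨s, hs, his⟩ := Set.mem_iUnion₂.1 hS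
  have his : i ∈ Ioc (θ.k s) (2 * θ.k s) := by simpa using his
  have hsI : i ∈ Ioc (θ.k s) (θ.k (s + 1)) :=
    Ioc_subset_Ioc_right (hdouble s hs) his
  obtain rfl := θ.eq_of_mem_Ioc hi hsI
  exact ⟨hs, his⟩

open scoped Classical in
lemma card_filter_mem_headSet_le {R : Set ℕ} (hdouble : ∀ r ∈ R, 2 * θ.k r ≤ θ.k (r + 1)) (r : ℕ) :
    #{i ∈ Ioc (θ.k r) (θ.k (r + 1)) | i ∈ θ.headSet R} ≤ R.indicator θ.k r := by
  by_cases hr : r ∈ R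
  · rw [Set.indicator_of_mem hr]
    calc #{i ∈ Ioc (θ.k r) (θ.k (r + 1)) | i ∈ θ.headSet R}
        ≤ #(Ioc (θ.k r) (2 * θ.k r)) :=
          card_le_card fun i hi => (mem_Ioc_of_mem_headSet hdouble (mem_filter.1 hi).1
            (mem_filter.1 hi).2).2
      _ = θ.k r := by rw [Nat.card_Ioc]; omega
  · rw [Set.indicator_of_notMem hr, Nat.le_zero, card_eq_zero, filter_eq_empty_iff]
    exact fun i hi hS => hr (mem_Ioc_of_mem_headSet hdouble hi hS).1

lemma lacStatConvTo_indicator_headSet {R : Set ℕ} (hdouble : ∀ r ∈ R, 2 * θ.k r ≤ θ.k (r + 1))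
    (hthin : ∀ ε > 0, ∀ᶠ r in atTop, r ∈ R →
      (θ.k r : ℝ) ≤ ε * ((θ.k (r + 1) - θ.k r : ℕ) : ℝ)) :
    LacStatConvTo θ ((θ.headSet R).indicator 1) 0 := by
  classical
  intro ε hε
  refine tendsto_order.2
    ⟨fun δ hδ => .of_forall fun r => hδ.trans_le (by positivity), fun δ hδ => ?_⟩
  filter_upwards [hthin (δ / 2) (half_pos hδ)] with r hr
  have hh : (0 : ℝ) < ((θ.k (r + 1) - θ.k r : ℕ) : ℝ) := by exact_mod_cast θ.k_succ_sub_k_pos r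
  have hsub : {i ∈ Ioc (θ.k r) (θ.k (r + 1)) | ε ≤ |(θ.headSet R).indicator 1 i - (0 : ℝ)|}
      ⊆ {i ∈ Ioc (θ.k r) (θ.k (r + 1)) | i ∈ θ.headSet R} :=
    monotone_filter_right _ fun i _ hi => Set.mem_of_indicator_ne_zero
      (abs_pos.1 (hε.trans_le (by simpa using hi)))
  have hind : ((R.indicator θ.k r : ℕ) : ℝ) ≤ δ / 2 * ((θ.k (r + 1) - θ.k r : ℕ) : ℝ) := by
    by_cases hrR : r ∈ R
    · simpa [Set.indicator_of_mem hrR] using hr hrR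
    · rw [Set.indicator_of_notMem hrR, Nat.cast_zero]
      exact mul_nonneg (half_pos hδ).le hh.le
  rw [div_lt_iff₀ hh]
  calc (#{i ∈ Ioc (θ.k r) (θ.k (r + 1)) | ε ≤ |(θ.headSet R).indicator 1 i - (0 : ℝ)|} : ℝ)
      ≤ ((R.indicator θ.k r : ℕ) : ℝ) := by
        exact_mod_cast (card_le_card hsub).trans (card_filter_mem_headSet_le hdouble r)
    _ ≤ δ / 2 * ((θ.k (r + 1) - θ.k r : ℕ) : ℝ) := hind
    _ < δ * ((θ.k (r + 1) - θ.k r : ℕ) : ℝ) := by gcongr; exact half_lt_self hδ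

lemma le_card_filter_indicator_headSet {R : Set ℕ} {r : ℕ} (hr : r ∈ R) :
    θ.k r ≤ #{i ∈ range (2 * θ.k r + 1) | 1 ≤ |(θ.headSet R).indicator 1 i - (0 : ℝ)|} := by
  calc θ.k r = #(Ioc (θ.k r) (2 * θ.k r)) := by rw [Nat.card_Ioc]; omega
    _ ≤ _ := card_le_card fun i hi => by
      have hS := mem_headSet_of_mem_Ioc hr (by simpa using hi)
      rw [mem_Ioc] at hi
      exact mem_filter.2 ⟨mem_range.2 (by omega), by simp [Set.indicator_of_mem hS]⟩

lemma not_statConvTo_indicator_headSet {R : Set ℕ} (hR : R.Infinite) :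
    ¬ StatConvTo ((θ.headSet R).indicator 1) 0 := by
  classical
  intro h
  have hlt := (h 1 one_pos).eventually (gt_mem_nhds (show (0 : ℝ) < 1 / 3 by norm_num))
  have hto : Tendsto (fun r => 2 * θ.k r + 1) atTop atTop :=
    tendsto_atTop_mono (fun r => show r ≤ _ by have := θ.self_le_k r; omega) tendsto_id
  obtain ⟨r, hrR, hr1, hr⟩ := ((Nat.frequently_atTop_iff_infinite.2 hR).and_eventually
    ((eventually_ge_atTop 1).and (hto.eventually hlt))).exists
  have hk : (1 : ℝ) ≤ θ.k r := by exact_mod_cast hr1.trans (θ.self_le_k r)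
  have hcard : (θ.k r : ℝ) ≤
      #{i ∈ range (2 * θ.k r + 1) | 1 ≤ |(θ.headSet R).indicator 1 i - (0 : ℝ)|} := by
    exact_mod_cast le_card_filter_indicator_headSet hrR
  rw [div_lt_iff₀ (by positivity)] at hr
  push_cast at hr
  linarith

variable (θ)

lemma exists_infinite_set_thin_blocks
    (hθ : ∀ H : ℝ, ∃ᶠ r in atTop, H ≤ (θ.k (r + 1) : ℝ) / (θ.k r : ℝ)) :
    ∃ R : Set ℕ, R.Infinite ∧ (∀ r ∈ R, 2 * θ.k r ≤ θ.k (r + 1)) ∧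
      ∀ ε > 0, ∀ᶠ r in atTop, r ∈ R →
        (θ.k r : ℝ) ≤ ε * ((θ.k (r + 1) - θ.k r : ℕ) : ℝ) := by
  obtain ⟨φ, hφ, hq⟩ := extraction_forall_of_frequently fun j : ℕ => hθ (j + 2)
  -- `(j + 2) * k ≤ k'` holds also when `k = 0`, where the ratio `k' / k` is `0`
  have hmul : ∀ j : ℕ, ((j : ℝ) + 2) * θ.k (φ j) ≤ θ.k (φ j + 1) := by
    intro j
    rcases (Nat.cast_nonneg (α := ℝ) (θ.k (φ j))).eq_or_lt with h0 | hpos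
    · rw [← h0, mul_zero]
      positivity
    · exact (le_div_iff₀ hpos).1 (hq j)
  have hh : ∀ j : ℕ, ((j : ℝ) + 1) * θ.k (φ j) ≤ ((θ.k (φ j + 1) - θ.k (φ j) : ℕ) : ℝ) := by
    intro j
    rw [Nat.cast_sub (θ.strictMono.monotone (Nat.le_succ _))]
    linarith [hmul j]
  refine ⟨Set.range φ, Set.infinite_range_of_injective hφ.injective, ?_, fun ε hε => ?_⟩
  · rintro _ ⟨j, rfl⟩
    have := hmul j
    exact_mod_cast (show (2 * θ.k (φ j) : ℝ) ≤ θ.k (φ j + 1) by nlinarith)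
  · obtain ⟨J, hJ⟩ := exists_nat_one_div_lt hε
    filter_upwards [eventually_ge_atTop (φ J)]
    rintro _ hr ⟨j, rfl⟩
    have hJj : (J : ℝ) ≤ j := by exact_mod_cast hφ.le_iff_le.1 hr
    calc (θ.k (φ j) : ℝ) = 1 / ((j : ℝ) + 1) * (((j : ℝ) + 1) * θ.k (φ j)) := by field_simp
      _ ≤ ε * ((θ.k (φ j + 1) - θ.k (φ j) : ℕ) : ℝ) := by
        gcongr
        · exact hJ.le.trans' (one_div_le_one_div_of_le (by positivity) (by linarith))
        · exact hh j

end Lacunary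

theorem exists_lacStatQC_not_statQC (θ : Lacunary)
    (hθ : ∀ H : ℝ, ∃ᶠ r in atTop, H ≤ (θ.k (r + 1) : ℝ) / (θ.k r : ℝ)) :
    ∃ a : ℕ → ℝ, LacStatQC θ a ∧ ¬ StatQC a := by
  obtain ⟨R, hRinf, hdouble, hthin⟩ := θ.exists_infinite_set_thin_blocks hθ
  obtain ⟨a, ha⟩ := exists_seq_sub_eq ((θ.headSet R).indicator 1)
  have hdiff : (fun n => a (n + 1) - a n) = (θ.headSet R).indicator 1 := funext ha
  refine ⟨a, ?_, ?_⟩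
  · rw [LacStatQC, hdiff]
    exact Lacunary.lacStatConvTo_indicator_headSet hdouble hthin
  · rw [StatQC, hdiff]
    exact Lacunary.not_statConvTo_indicator_headSet hRinf
end

section
/- Every lacunarily statistically convergent sequence of real numbers has a subsequence converging (in the ordinary sense) to the same limit. -/
open Filter Finset Topology

theorem lacStatConv_frequently (θ : Lacunary) (x : ℕ → ℝ) (ℓ : ℝ)
    (h : LacStatConvTo θ x ℓ) (ε : ℝ) (hε : 0 < ε) :
    ∃ᶠ i in atTop, |x i - ℓ| < ε := by
  rw [frequently_atTop]
  intro N
  have hk : Tendsto θ.k atTop atTop := θ.strictMono.tendsto_atTop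
  have h1 : ∀ᶠ r in atTop, N ≤ θ.k r := hk.eventually_ge_atTop N
  have h2 : ∀ᶠ r in atTop, 1 ≤ θ.k (r + 1) - θ.k r := θ.h_tendsto.eventually_ge_atTop 1
  have h3 : ∀ᶠ r in atTop,
      ((((Finset.Ioc (θ.k r) (θ.k (r + 1))).filter fun i => ε ≤ |x i - ℓ|).card : ℝ)
        / ((θ.k (r + 1) - θ.k r : ℕ) : ℝ)) < 1 :=
    (h ε hε).eventually_lt_const one_pos
  obtain ⟨r, hr1, hr2, hr3⟩ := (h1.and (h2.and h3)).exists
  set S := Finset.Ioc (θ.k r) (θ.k (r + 1))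
  have hpos : (0 : ℝ) < ((θ.k (r + 1) - θ.k r : ℕ) : ℝ) := by
    exact_mod_cast Nat.lt_of_lt_of_le Nat.zero_lt_one hr2
  have hcard : ((S.filter fun i => ε ≤ |x i - ℓ|).card : ℝ)
      < ((θ.k (r + 1) - θ.k r : ℕ) : ℝ) := by
    have := (div_lt_one hpos).mp hr3
    linarith
  have hScard : S.card = θ.k (r + 1) - θ.k r := Nat.card_Ioc _ _
  have hlt : (S.filter fun i => ε ≤ |x i - ℓ|).card < S.card := by
    rw [hScard]; exact_mod_cast hcard
  by_contra hcon
  push_neg at hcon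
  have : (S.filter fun i => ε ≤ |x i - ℓ|) = S := by
    apply Finset.filter_true_of_mem
    intro i hi
    rcases Finset.mem_Ioc.mp hi with ⟨hi1, _⟩
    by_contra hx
    push_neg at hx
    exact absurd hx (not_lt.mpr (hcon i (le_of_lt (lt_of_le_of_lt hr1 hi1))))
  rw [this] at hlt
  exact lt_irrefl _ hlt

theorem lacStatConv_has_convergent_subseq (θ : Lacunary) (x : ℕ → ℝ) (ℓ : ℝ)
    (h : LacStatConvTo θ x ℓ) :
    ∃ φ : ℕ → ℕ, StrictMono φ ∧ Tendsto (x ∘ φ) atTop (𝓝 ℓ) := by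
  obtain ⟨φ, hφ, hP⟩ := Filter.extraction_forall_of_frequently
    (P := fun n k => |x k - ℓ| < 1 / (n + 1))
    (fun n => lacStatConv_frequently θ x ℓ h (1 / (n + 1)) (by positivity))
  refine ⟨φ, hφ, ?_⟩
  rw [Metric.tendsto_atTop]
  intro ε hε
  obtain ⟨N, hN⟩ := exists_nat_gt (1 / ε)
  refine ⟨N, fun n hn => ?_⟩
  have h1 : 1 / ((n : ℝ) + 1) < ε := by
    rw [div_lt_iff₀ (by positivity)]
    rw [div_lt_iff₀ hε] at hN
    nlinarith [(Nat.cast_le (α := ℝ)).mpr hn]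
  calc dist ((x ∘ φ) n) ℓ = |x (φ n) - ℓ| := by simp [Real.dist_eq]
    _ < 1 / ((n : ℝ) + 1) := hP n
    _ < ε := h1
end

section
/- If f : ℝ → ℝ is lacunarily statistically ward continuous, then f is lacunarily statistically continuous: whenever a sequence (α_n) converges lacunary statistically to α_0, the sequence (f(α_n)) converges lacunary statistically to f(α_0). -/
open Filter Finset Topology

/- A ward continuous `f` is continuous: otherwise pick `t n → α₀` with `|f (t n) - f α₀| ≥ ε` and
interleave it with the constant `α₀`. The interleaved sequence converges, so it is quasi-Cauchy,
while every consecutive difference of its image is at least `ε`. Continuity at `α₀` then carries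
lacunary statistical convergence to `α₀` over to `f`, since `|f (α i) - f α₀| ≥ ε` forces
`|α i - α₀| ≥ δ`. -/

namespace Lacunary

lemma sub_pos (θ : Lacunary) (r : ℕ) : 0 < θ.k (r + 1) - θ.k r :=
  Nat.sub_pos_of_lt (θ.strictMono r.lt_succ_self)

end Lacunary

section

variable {θ : Lacunary} {x : ℕ → ℝ} {ℓ : ℝ}

lemma LacStatConvTo.of_tendsto (hx : Tendsto x atTop (𝓝 ℓ)) : LacStatConvTo θ x ℓ := by
  intro ε hε
  obtain ⟨N, hN⟩ := Metric.tendsto_atTop.mp hx ε hε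
  refine tendsto_const_nhds.congr' ?_
  filter_upwards [θ.strictMono.tendsto_atTop.eventually_ge_atTop N] with r hr
  rw [Finset.filter_false_of_mem, Finset.card_empty, Nat.cast_zero, zero_div]
  intro i hi
  exact not_le.mpr (hN i (hr.trans (Finset.mem_Ioc.mp hi).1.le))

lemma not_lacStatConvTo_of_le_abs_sub {ε : ℝ} (hε : 0 < ε) (h : ∀ i, ε ≤ |x i - ℓ|) :
    ¬ LacStatConvTo θ x ℓ := by
  intro hx
  have hone : ∀ r, ((((Finset.Ioc (θ.k r) (θ.k (r + 1))).filter
      fun i => ε ≤ |x i - ℓ|).card : ℝ) / ((θ.k (r + 1) - θ.k r : ℕ) : ℝ)) = 1 := by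
    intro r
    rw [Finset.filter_true_of_mem fun i _ => h i, Nat.card_Ioc]
    exact div_self (Nat.cast_ne_zero.mpr (θ.sub_pos r).ne')
  have := hx ε hε
  simp only [hone, tendsto_const_nhds_iff] at this
  exact one_ne_zero this

lemma LacStatConvTo.comp_continuousAt {f : ℝ → ℝ} (hx : LacStatConvTo θ x ℓ)
    (hf : ContinuousAt f ℓ) : LacStatConvTo θ (f ∘ x) (f ℓ) := by
  intro ε hε
  obtain ⟨δ, hδ, hfδ⟩ := Metric.continuousAt_iff.mp hf ε hε
  refine squeeze_zero (fun r => by positivity) (fun r => ?_) (hx δ hδ)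
  gcongr (#(filter (fun i => ?_) _) : ℝ) / _ with i
  contrapose!
  exact fun hi => hfδ hi

lemma LacStatQC.of_tendsto (hx : Tendsto x atTop (𝓝 ℓ)) : LacStatQC θ x := by
  refine LacStatConvTo.of_tendsto ?_
  simpa using (hx.comp (tendsto_add_atTop_nat 1)).sub hx

end

lemma continuousAt_of_lacStatWardCont {θ : Lacunary} {f : ℝ → ℝ}
    (hf : ∀ a : ℕ → ℝ, LacStatQC θ a → LacStatQC θ (f ∘ a)) (a₀ : ℝ) : ContinuousAt f a₀ := by
  by_contra hcont
  obtain ⟨ε, hε, hfreq⟩ : ∃ ε > 0, ∃ᶠ t in 𝓝 a₀, ε ≤ dist (f t) (f a₀) := by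
    simpa [ContinuousAt, Metric.tendsto_nhds] using hcont
  obtain ⟨t, ht, hft⟩ := exists_seq_forall_of_frequently hfreq
  set b : ℕ → ℝ := fun n => if Even n then a₀ else t n with hb
  have hb_tendsto : Tendsto b atTop (𝓝 a₀) :=
    tendsto_iff_dist_tendsto_zero.mpr <| squeeze_zero (fun _ => dist_nonneg)
      (fun n => by simp only [hb]; split_ifs <;> simp)
      (tendsto_iff_dist_tendsto_zero.mp ht)
  have hjump : ∀ n, ε ≤ |(f ∘ b) (n + 1) - (f ∘ b) n - 0| := by
    intro n
    rcases Nat.even_or_odd n with hn | hn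
    · simpa [hb, hn, Nat.even_add_one, Real.dist_eq] using hft (n + 1)
    · simpa [hb, Nat.not_even_iff_odd.mpr hn, Nat.even_add_one, Real.dist_eq, abs_sub_comm]
        using hft n
  exact not_lacStatConvTo_of_le_abs_sub hε hjump (hf b (LacStatQC.of_tendsto hb_tendsto))

theorem lacStatWardCont_implies_lacStatCont_general (θ : Lacunary)
    (f : ℝ → ℝ) (hf : ∀ a : ℕ → ℝ, LacStatQC θ a → LacStatQC θ (f ∘ a)) :
    ∀ (a : ℕ → ℝ) (a₀ : ℝ), LacStatConvTo θ a a₀ → LacStatConvTo θ (f ∘ a) (f a₀) :=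
  fun _ a₀ ha => ha.comp_continuousAt (continuousAt_of_lacStatWardCont hf a₀)

theorem lacStatWardCont_implies_lacStatCont (θ : Lacunary) (hθ : LiminfQGtOne θ)
    (f : ℝ → ℝ) (hf : ∀ a : ℕ → ℝ, LacStatQC θ a → LacStatQC θ (f ∘ a)) :
    ∀ (a : ℕ → ℝ) (a₀ : ℝ), LacStatConvTo θ a a₀ → LacStatConvTo θ (f ∘ a) (f a₀) :=
  lacStatWardCont_implies_lacStatCont_general θ f hf
end

section
/- If f : ℝ → ℝ is lacunarily statistically ward continuous, then f is continuous in the ordinary sense. -/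
open Filter Finset Topology

/-!
If `f` were discontinuous at `c`, there would be `z j → c` with `|f (z j) - f c| ≥ ε` for all `j`.
The sequence `c, z 0, c, z 1, …` converges, so it is quasi-Cauchy and a fortiori lacunarily
statistically quasi-Cauchy. But the jumps of its image under `f` are at least `ε` at every even
index, i.e. on about half of every block `I_r`, so the image is not lacunarily statistically
quasi-Cauchy.
-/

section interleave

variable {α : Type*}

def interleave (u v : ℕ → α) (n : ℕ) : α :=
  if Even n then u (n / 2) else v (n / 2)

@[simp]
lemma interleave_two_mul (u v : ℕ → α) (j : ℕ) : interleave u v (2 * j) = u j := by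
  simp [interleave]

@[simp]
lemma interleave_two_mul_add_one (u v : ℕ → α) (j : ℕ) : interleave u v (2 * j + 1) = v j := by
  simp [interleave, Nat.mul_add_div]

lemma tendsto_interleave [TopologicalSpace α] {u v : ℕ → α} {L : α}
    (hu : Tendsto u atTop (𝓝 L)) (hv : Tendsto v atTop (𝓝 L)) :
    Tendsto (interleave u v) atTop (𝓝 L) :=
  have half : Tendsto (· / 2) atTop atTop := Nat.tendsto_div_const_atTop two_ne_zero
  Tendsto.if ((hu.comp half).mono_left inf_le_left) ((hv.comp half).mono_left inf_le_left)

end interleave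

lemma four_mul_card_filter_even_Ioc {s t : ℕ} (h : s + 2 ≤ t) :
    t - s ≤ 4 * #{i ∈ Ioc s t | Even i} := by
  have hsub : (Ioc (s / 2) (t / 2)).image (2 * ·) ⊆ {i ∈ Ioc s t | Even i} := by
    simp only [subset_iff, mem_image, mem_Ioc, mem_filter]
    rintro _ ⟨j, hj, rfl⟩
    exact ⟨by omega, even_two_mul j⟩
  have hcard := card_le_card hsub
  rw [card_image_of_injective _ (fun _ _ _ => by omega), Nat.card_Ioc] at hcard
  omega

lemma lacStatConvTo_of_tendsto (θ : Lacunary) {x : ℕ → ℝ} {ℓ : ℝ}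
    (h : Tendsto x atTop (𝓝 ℓ)) : LacStatConvTo θ x ℓ := by
  intro ε hε
  obtain ⟨N, hN⟩ := Metric.tendsto_atTop.mp h ε hε
  refine tendsto_const_nhds.congr' ?_
  filter_upwards [eventually_ge_atTop N] with r hr
  have hempty : {i ∈ Ioc (θ.k r) (θ.k (r + 1)) | ε ≤ |x i - ℓ|} = ∅ := by
    refine filter_false_of_mem fun i hi => not_le.mpr ?_
    have hNi : N ≤ i := hr.trans (θ.strictMono.le_apply.trans (mem_Ioc.mp hi).1.le)
    simpa [Real.dist_eq] using hN i hNi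
  simp [hempty]

lemma lacStatQC_of_tendsto (θ : Lacunary) {x : ℕ → ℝ} {L : ℝ}
    (h : Tendsto x atTop (𝓝 L)) : LacStatQC θ x := by
  have hdiff : Tendsto (fun n => x (n + 1) - x n) atTop (𝓝 0) := by
    simpa using (h.comp (tendsto_add_atTop_nat 1)).sub h
  exact lacStatConvTo_of_tendsto θ hdiff

lemma not_lacStatConvTo_of_forall_even (θ : Lacunary) {x : ℕ → ℝ} {ℓ ε : ℝ} (hε : 0 < ε)
    (hfar : ∀ j, ε ≤ |x (2 * j) - ℓ|) : ¬ LacStatConvTo θ x ℓ := by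
  intro hconv
  have hsmall := (hconv ε hε).eventually (gt_mem_nhds (by norm_num : (0 : ℝ) < 1 / 4))
  obtain ⟨r, hr, hlen⟩ := (hsmall.and (θ.h_tendsto.eventually_ge_atTop 2)).exists
  set s := θ.k r
  set t := θ.k (r + 1)
  have hevens : {i ∈ Ioc s t | Even i} ⊆ {i ∈ Ioc s t | ε ≤ |x i - ℓ|} := by
    intro i
    simp only [mem_filter]
    rintro ⟨hi, j, rfl⟩
    exact ⟨hi, by simpa [← two_mul] using hfar j⟩
  have hcount : ((t - s : ℕ) : ℝ) ≤ 4 * #{i ∈ Ioc s t | ε ≤ |x i - ℓ|} := by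
    exact_mod_cast (four_mul_card_filter_even_Ioc (by omega)).trans
      (Nat.mul_le_mul_left 4 (card_le_card hevens))
  have hpos : (0 : ℝ) < ((t - s : ℕ) : ℝ) := by exact_mod_cast (by omega : 0 < t - s)
  rw [div_lt_iff₀ hpos] at hr
  linarith

theorem lacStatWardCont_implies_continuous_general (θ : Lacunary)
    (f : ℝ → ℝ) (hf : ∀ a : ℕ → ℝ, LacStatQC θ a → LacStatQC θ (f ∘ a)) :
    Continuous f := by
  rw [continuous_iff_seqContinuous]
  intro y c hy
  by_contra hnot
  rw [Metric.tendsto_atTop] at hnot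
  push Not at hnot
  obtain ⟨ε, hε, hfreq⟩ := hnot
  obtain ⟨φ, hφ, hfar⟩ := extraction_of_frequently_atTop (frequently_atTop.mpr hfreq)
  have hz : Tendsto (y ∘ φ) atTop (𝓝 c) := hy.comp hφ.tendsto_atTop
  set b := interleave (fun _ => c) (y ∘ φ)
  refine not_lacStatConvTo_of_forall_even θ hε (fun j => ?_)
    (hf b (lacStatQC_of_tendsto θ (tendsto_interleave tendsto_const_nhds hz)))
  simpa [b, Real.dist_eq] using hfar j

theorem lacStatWardCont_implies_continuous (θ : Lacunary) (hθ : LiminfQGtOne θ)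
    (f : ℝ → ℝ) (hf : ∀ a : ℕ → ℝ, LacStatQC θ a → LacStatQC θ (f ∘ a)) :
    Continuous f :=
  lacStatWardCont_implies_continuous_general θ f hf
end

section
/- The image of a lacunarily statistically ward compact subset of ℝ under a lacunarily statistically ward continuous function is lacunarily statistically ward compact. -/
open Filter Finset Topology

theorem image_lacStatWardCompact (θ : Lacunary) (A : Set ℝ) (f : ℝ → ℝ)
    (hA : LacStatWardCompact θ A) (hf : LacStatWardContOn θ f A) :
    LacStatWardCompact θ (f '' A) := by
  intro y hy
  choose x hxA hxy using hy
  obtain rfl : f ∘ x = y := funext hxy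
  obtain ⟨φ, hφ, hqc⟩ := hA x hxA
  exact ⟨φ, hφ, hf (x ∘ φ) (fun n => hxA (φ n)) hqc⟩
end

section
/- If (f_n) is a sequence of lacunarily statistically ward continuous functions on a set A ⊆ ℝ converging uniformly to f, then f is lacunarily statistically ward continuous on A. -/
open Filter Finset Topology

theorem uniform_limit_lacStatWardCont (θ : Lacunary) (A : Set ℝ)
    (F : ℕ → ℝ → ℝ) (f : ℝ → ℝ)
    (hF : ∀ n, LacStatWardContOn θ (F n) A)
    (hunif : TendstoUniformlyOn F f atTop A) :
    LacStatWardContOn θ f A := by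
  intro x hx hqc
  intro ε hε
  obtain ⟨N, hN⟩ := ((Metric.tendstoUniformlyOn_iff.1 hunif) (ε/3) (by linarith)).exists
  have hqc' := hF N x hx hqc (ε/3) (by linarith)
  apply squeeze_zero (g := fun r : ℕ =>
      ((((Finset.Ioc (θ.k r) (θ.k (r + 1))).filter fun i =>
          ε/3 ≤ |F N (x (i + 1)) - F N (x i) - 0|).card : ℝ)
        / ((θ.k (r + 1) - θ.k r : ℕ) : ℝ)))
  · intro r
    positivity
  · intro r
    have hden : (0:ℝ) < ((θ.k (r + 1) - θ.k r : ℕ) : ℝ) := by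
      have := θ.strictMono (Nat.lt_succ_self r)
      have : 0 < θ.k (r+1) - θ.k r := Nat.sub_pos_of_lt this
      exact_mod_cast this
    have hsub : ((Finset.Ioc (θ.k r) (θ.k (r + 1))).filter fun i =>
          ε ≤ |(f ∘ x) (i + 1) - (f ∘ x) i - 0|) ⊆
        ((Finset.Ioc (θ.k r) (θ.k (r + 1))).filter fun i =>
          ε/3 ≤ |F N (x (i + 1)) - F N (x i) - 0|) := by
      intro i hi
      simp only [Finset.mem_filter, Function.comp_apply, sub_zero] at hi ⊢
      refine ⟨hi.1, ?_⟩
      have h1 := hN (x (i+1)) (hx (i+1))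
      have h2 := hN (x i) (hx i)
      rw [Real.dist_eq] at h1 h2
      have h3 := hi.2
      have : |f (x (i+1)) - f (x i)| ≤ |f (x (i+1)) - F N (x (i+1))| +
        |F N (x (i+1)) - F N (x i)| + |F N (x i) - f (x i)| := by
        calc |f (x (i+1)) - f (x i)|
            = |(f (x (i+1)) - F N (x (i+1))) + (F N (x (i+1)) - F N (x i)) + (F N (x i) - f (x i))| := by ring_nf
          _ ≤ _ := by
              refine (abs_add_le _ _).trans ?_
              gcongr
              exact abs_add_le _ _
      rw [abs_sub_comm (F N (x i))] at this
      linarith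
    have hcard : ((((Finset.Ioc (θ.k r) (θ.k (r + 1))).filter fun i =>
          ε ≤ |(f ∘ x) (i + 1) - (f ∘ x) i - 0|).card : ℝ)) ≤
        ((((Finset.Ioc (θ.k r) (θ.k (r + 1))).filter fun i =>
          ε/3 ≤ |F N (x (i + 1)) - F N (x i) - 0|).card : ℝ)) := by
      exact_mod_cast Finset.card_le_card hsub
    exact div_le_div_of_nonneg_right hcard hden.le
  · exact hqc'
end
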